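/- arXiv:2309.11673 — 2 statements merged into one kernel-verified Lean document; each statement's English description precedes it below -/
import Mathlib

section
/- For any cycle with ordered distinct vertices (k_0, …, k_{n-1}) in the interaction graph, the loop operator identity i^n · ∏_{j=0}^{n-1} A_{k_j, k_{(j+1 mod n)}} = 1 holds in the CAR algebra. -/
lemma smul_ofFn_prod {A : Type*} [Ring A] [Algebra ℂ A] (r : ℂ) :
    ∀ (n : ℕ) (g : Fin n → A),
      (List.ofFn (fun j => r • g j)).prod = r ^ n • (List.ofFn g).prod := by
  intro n
  induction n with
  | zero => intro g; simp
  | succ m ih =>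
    intro g
    rw [List.ofFn_succ, List.ofFn_succ, List.prod_cons, List.prod_cons, ih]
    rw [smul_mul_smul_comm, pow_succ]
    ring_nf

lemma telescope {A : Type*} [Ring A] (b : ℕ → A) (hsq : ∀ j, b j * b j = 1) :
    ∀ m : ℕ, ((List.range (m + 1)).map (fun j => b j * b (j + 1))).prod
      = b 0 * b (m + 1) := by
  intro m
  induction m with
  | zero => simp [List.range_succ]
  | succ p ih =>
    rw [List.range_succ, List.map_append, List.prod_append, ih]
    simp only [List.map_cons, List.map_nil, List.prod_cons, List.prod_nil, mul_one]
    rw [mul_assoc, ← mul_assoc (b (p+1)), hsq, one_mul]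

/-- For any cycle with ordered distinct vertices
`(k_0, …, k_{n-1})`, the loop operator identity
`i^n · ∏_{j=0}^{n-1} A_{k_j, k_{(j+1 mod n)}} = 1` holds (the ordered product
is taken as a list product since the factors need not commute). -/
theorem loop_operator_identity
    {A : Type*} [Ring A] [Algebra ℂ A] {ι : Type*} [DecidableEq ι]
    (c : ι × Fin 2 → A)
    (hcc : ∀ p q, c p * c q + c q * c p = if p = q then (2 : A) else 0)
    (Aop : ι → ι → A)
    (hA : ∀ j k, Aop j k = (-Complex.I) • (c (j, 0) * c (k, 0)))
    (n : ℕ) [NeZero n] (k : Fin n → ι) (hk : Function.Injective k) :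
    (Complex.I ^ n) •
      (List.ofFn (fun j : Fin n => Aop (k j) (k (j + 1)))).prod = 1 := by
  -- squares are 1
  have hsq : ∀ p, c p * c p = (1 : A) := by
    intro p
    have h := hcc p p
    simp only [if_pos rfl] at h
    have h2 : (2 : ℂ) • (c p * c p) = (2 : ℂ) • (1 : A) := by
      rw [two_smul, two_smul, h]
      exact one_add_one_eq_two.symm
    exact smul_right_injective A (two_ne_zero) h2
  -- rewrite factors
  simp only [hA]
  rw [smul_ofFn_prod, smul_smul, ← mul_pow]
  have : Complex.I * -Complex.I = 1 := by
    rw [mul_neg, Complex.I_mul_I]; norm_num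
  rw [this, one_pow, one_smul]
  -- switch to ℕ-indexed product
  open Fin.NatCast in
  set b : ℕ → A := fun j => c (k ((j : Fin n)), 0) with hb
  have hfac : (fun j : Fin n => c (k j, 0) * c (k (j + 1), 0))
      = fun j : Fin n => b j.val * b (j.val + 1) := by
    funext j
    simp only [hb]
    congr 2
    · rw [Fin.cast_val_eq_self]
    · rw [Nat.cast_add, Nat.cast_one, Fin.cast_val_eq_self]
  rw [hfac, List.ofFn_eq_map]
  have hmap : (List.finRange n).map (fun j : Fin n => b j.val * b (j.val + 1))
      = (List.range n).map (fun j => b j * b (j + 1)) := by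
    apply List.ext_getElem <;> simp
  rw [hmap]
  obtain ⟨m, hm⟩ := Nat.exists_eq_succ_of_ne_zero (NeZero.ne n)
  subst hm
  rw [telescope b (fun j => hsq _) m]
  have : b (m + 1) = b 0 := by
    simp only [hb]
    congr 2
    simp [Fin.natCast_self]
  rw [this, hsq]
end

section
/- With edge operators on four qubits given by A₁₂ = (I⊗Z)⊗(X⊗Y)-type assignments as in the GSE square-lattice encoding, the central plaquette loop operator equals i⁴ A₁₂ A₂₄ A₄₃ A₃₁ = I⊗Y⊗X⊗Z⊗Y⊗X⊗Z⊗I, an eight-qubit Pauli operator of weight six. -/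
open Matrix Kronecker

noncomputable section

def PI : Matrix (Fin 2) (Fin 2) ℂ := 1
def PX : Matrix (Fin 2) (Fin 2) ℂ := !![0, 1; 1, 0]
def PY : Matrix (Fin 2) (Fin 2) ℂ := !![0, -Complex.I; Complex.I, 0]
def PZ : Matrix (Fin 2) (Fin 2) ℂ := !![1, 0; 0, -1]

/-- An eight-qubit Pauli string (qubits ordered NW₁ NW₂ NE₁ NE₂ SW₁ SW₂ SE₁ SE₂). -/
def str8 (a b c d e f g h : Matrix (Fin 2) (Fin 2) ℂ) :=
  a ⊗ₖ b ⊗ₖ c ⊗ₖ d ⊗ₖ e ⊗ₖ f ⊗ₖ g ⊗ₖ h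

/-- Horizontal edge operator `A₁₂` (NW→NE): `IZ` on NW, `XY` on NE. -/
def A12 := str8 PI PZ PX PY PI PI PI PI
/-- Vertical edge operator `A₂₄` (NE→SE): `IX` on NE, `YY` on SE. -/
def A24 := str8 PI PI PI PX PI PI PY PY
/-- Horizontal edge operator `A₄₃ = -A₃₄` (reversed orientation): `IZ` on SW, `XY` on SE. -/
def A43 := -str8 PI PI PI PI PI PZ PX PY
/-- Vertical edge operator `A₃₁` (SW→NW): `IX` on NW, `YY` on SW. -/
def A31 := str8 PI PX PI PI PY PY PI PI

lemma hZX : PZ * PX = Complex.I • PY := by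
  ext i j; fin_cases i <;> fin_cases j <;>
    simp [PZ, PX, PY, Matrix.mul_apply, Fin.sum_univ_two]

lemma hYX : PY * PX = (-Complex.I) • PZ := by
  ext i j; fin_cases i <;> fin_cases j <;>
    simp [PZ, PX, PY, Matrix.mul_apply, Fin.sum_univ_two]

lemma hZY : PZ * PY = (-Complex.I) • PX := by
  ext i j; fin_cases i <;> fin_cases j <;>
    simp [PZ, PX, PY, Matrix.mul_apply, Fin.sum_univ_two]

lemma hYY : PY * PY = PI := by
  ext i j; fin_cases i <;> fin_cases j <;>
    simp [PI, PY, Matrix.mul_apply, Fin.sum_univ_two, Matrix.one_apply,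
      Complex.ext_iff]

/-- the central plaquette loop operator equals
`i⁴ A₁₂ A₂₄ A₄₃ A₃₁ = IYXZYXZI`, an eight-qubit Pauli operator of weight six. -/
theorem central_plaquette_loop :
    (Complex.I ^ 4) • (A12 * A24 * A43 * A31) =
      str8 PI PY PX PZ PY PX PZ PI := by
  have hI4 : (Complex.I : ℂ) ^ 4 = 1 := by
    simp [pow_succ, Complex.I_mul_I]
  rw [hI4, one_smul]
  simp only [A12, A24, A43, A31, str8, mul_neg, neg_mul,
    ← Matrix.mul_kronecker_mul]
  have hPI : PI = (1 : Matrix (Fin 2) (Fin 2) ℂ) := rfl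
  simp only [hPI, one_mul, mul_one, hZX, hYX, hZY, hYY, hPI,
    Matrix.smul_kronecker, Matrix.kronecker_smul, smul_smul]
  rw [show (-Complex.I * (-Complex.I * (-Complex.I * Complex.I)) : ℂ) = -1 by ring_nf; simp [Complex.I_sq]]
  rw [neg_smul, one_smul, neg_neg]

end
end
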